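/- Let m ≥ 1, β_i > 0, γ_i > 0 for i = 1,…,m, and let 0 < N^{(1)} < N^{(2)} be two budgets with optimal allocations N*(N^{(1)}) and N*(N^{(2)}) (minimizers of f(N) = ∑_{i=1}^m β_i · N_i^{-γ_i} on S(N^{(1)}) and S(N^{(2)}) respectively). Define φ : [0, ∞) → ℝ by φ(k) = ∑_{i=1}^m N_i*(N^{(2)}) · ( N_i*(N^{(2)}) / N_i*(N^{(1)}) )^k. Then φ is continuous, strictly increasing, φ(0) = N^{(2)}, and φ(k) → ∞ as k → ∞; consequently, for every target budget N^{(t)} ≥ N^{(2)} there exists a unique k ≥ 0 with φ(k) = N^{(t)}, and the allocation M_i = N_i*(N^{(2)}) · ( N_i*(N^{(2)}) / N_i*(N^{(1)}) )^k for this k is the optimal allocation at budget N^{(t)}. -/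

import Mathlib

open Finset Real Filter Topology

/-!
At an optimal allocation all marginal costs `β i γ i N_i ^ (-γ i - 1)` share a common value
(Lagrange condition, from the first-order condition along `e_i - e_j`), and by convexity of
`t ↦ t ^ (-γ)` this condition is also sufficient. Since the marginal cost is strictly
decreasing in `N_i`, going from budget `N₁` to `N₂ > N₁` increases every coordinate, so all
ratios `y i / x i` exceed `1` and `φ` is a positive combination of increasing exponentials.
Finally `(y i / x i) ^ (-γ i - 1)` is the ratio of the two common marginal costs, the same for
every `i`; hence along the geometric path `y i (y i / x i) ^ k` the marginal costs stay equal,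
and every allocation on the path is optimal for its own budget.
-/

variable {ι : Type*}

noncomputable def marginalCost (β γ w : ι → ℝ) (i : ι) : ℝ := β i * γ i * w i ^ (-γ i - 1)

lemma marginalCost_lt_marginalCost_iff {β γ w w' : ι → ℝ} {i : ι} (hβ : 0 < β i)
    (hγ : 0 < γ i) (hw : 0 < w i) (hw' : 0 < w' i) :
    marginalCost β γ w' i < marginalCost β γ w i ↔ w i < w' i := by
  rw [marginalCost, marginalCost, mul_lt_mul_iff_right₀ (mul_pos hβ hγ),
    rpow_lt_rpow_iff_of_neg hw' hw (by linarith)]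

lemma mul_div_rpow_rpow {a b : ℝ} (ha : 0 < a) (hb : 0 < b) (k p : ℝ) :
    (b * (b / a) ^ k) ^ p = b ^ p * (b ^ p / a ^ p) ^ k := by
  have hba := div_pos hb ha
  rw [mul_rpow hb.le (rpow_nonneg hba.le _), ← rpow_mul hba.le, mul_comm k, rpow_mul hba.le,
    div_rpow hb.le ha.le]

lemma marginalCost_geometric {β γ x y : ι → ℝ} (hx : ∀ i, 0 < x i) (hy : ∀ i, 0 < y i)
    (k : ℝ) (i : ι) :
    marginalCost β γ (fun i => y i * (y i / x i) ^ k) i =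
      marginalCost β γ y i * (marginalCost β γ y i / marginalCost β γ x i) ^ k := by
  rcases eq_or_ne (β i * γ i) 0 with h | h
  · simp [marginalCost, h]
  · rw [marginalCost, marginalCost, marginalCost, mul_div_mul_left _ _ h,
      mul_div_rpow_rpow (hx i) (hy i)]
    ring

variable [Fintype ι]

noncomputable def powerLoss (β γ w : ι → ℝ) : ℝ := ∑ i, β i * w i ^ (-γ i)

def IsOptimalAllocation (β γ : ι → ℝ) (B : ℝ) (w : ι → ℝ) : Prop :=
  (∀ i, 0 < w i) ∧ ∑ i, w i = B ∧
    ∀ z : ι → ℝ, (∀ i, 0 < z i) → ∑ i, z i = B → powerLoss β γ w ≤ powerLoss β γ z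

lemma one_sub_mul_sub_one_le_rpow_neg {u g : ℝ} (hu : 0 < u) (hg : 0 ≤ g) :
    1 - g * (u - 1) ≤ u ^ (-g) := by
  have hlog : g * log u ≤ g * (u - 1) := mul_le_mul_of_nonneg_left (log_le_sub_one_of_pos hu) hg
  rw [rpow_def_of_pos hu]
  linarith [add_one_le_exp (log u * -g)]

lemma rpow_neg_tangent_le {a b g : ℝ} (ha : 0 < a) (hb : 0 < b) (hg : 0 ≤ g) :
    a ^ (-g) - g * a ^ (-g - 1) * (b - a) ≤ b ^ (-g) := by
  have h := mul_le_mul_of_nonneg_left (one_sub_mul_sub_one_le_rpow_neg (div_pos hb ha) hg)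
    (rpow_nonneg ha.le (-g))
  rw [← mul_rpow ha.le (div_pos hb ha).le, mul_div_cancel₀ _ ha.ne'] at h
  have htangent : a ^ (-g) - g * a ^ (-g - 1) * (b - a) = a ^ (-g) * (1 - g * (b / a - 1)) := by
    rw [rpow_sub_one ha.ne']
    field_simp
  exact htangent ▸ h

theorem powerLoss_le_of_marginalCost_eq {β γ w z : ι → ℝ} (hβ : ∀ i, 0 ≤ β i)
    (hγ : ∀ i, 0 ≤ γ i) (hw : ∀ i, 0 < w i) (hz : ∀ i, 0 < z i)
    (hsum : ∑ i, z i = ∑ i, w i) {c : ℝ} (hc : ∀ i, marginalCost β γ w i = c) :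
    powerLoss β γ w ≤ powerLoss β γ z :=
  calc powerLoss β γ w = ∑ i, (β i * w i ^ (-γ i) - c * (z i - w i)) := by
        rw [sum_sub_distrib, ← mul_sum, sum_sub_distrib, hsum, sub_self, mul_zero, sub_zero]
        rfl
    _ ≤ powerLoss β γ z := sum_le_sum fun i _ => by
        have h := mul_le_mul_of_nonneg_left (rpow_neg_tangent_le (hw i) (hz i) (hγ i)) (hβ i)
        rw [← hc i, marginalCost]
        linarith

lemma hasDerivAt_powerLoss_line {β γ w : ι → ℝ} (hw : ∀ i, 0 < w i) (v : ι → ℝ) :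
    HasDerivAt (fun t : ℝ => powerLoss β γ (w + t • v)) (-∑ i, marginalCost β γ w i * v i) 0 := by
  rw [← sum_neg_distrib]
  refine HasDerivAt.fun_sum (A := fun i t => β i * (w i + t * v i) ^ (-γ i)) fun i _ => ?_
  have h := (((hasDerivAt_mul_const (x := (0 : ℝ)) (v i)).const_add (w i)).rpow_const
    (p := -γ i) (Or.inl (by simpa using (hw i).ne'))).const_mul (β i)
  refine h.congr_deriv ?_
  simp only [marginalCost, zero_mul, add_zero]
  ring

lemma IsOptimalAllocation.isLocalMin_line {β γ w : ι → ℝ} {B : ℝ}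
    (hw : IsOptimalAllocation β γ B w) {v : ι → ℝ} (hv : ∑ i, v i = 0) :
    IsLocalMin (fun t : ℝ => powerLoss β γ (w + t • v)) 0 := by
  have hpos : ∀ᶠ t in 𝓝 (0 : ℝ), ∀ i, 0 < w i + t * v i := eventually_all.2 fun i =>
    ((continuous_const.add (continuous_id.mul continuous_const)).tendsto 0).eventually
      (lt_mem_nhds (by simpa using hw.1 i))
  filter_upwards [hpos] with t ht
  simpa using hw.2.2 (w + t • v) ht (by simp [sum_add_distrib, ← mul_sum, hv, hw.2.1])

theorem IsOptimalAllocation.exists_marginalCost_eq {β γ w : ι → ℝ} {B : ℝ}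
    (hw : IsOptimalAllocation β γ B w) : ∃ c, ∀ i, marginalCost β γ w i = c := by
  classical
  have hpair (i j : ι) : marginalCost β γ w i = marginalCost β γ w j := by
    set v : ι → ℝ := Pi.single i 1 - Pi.single j 1
    have h := (hw.isLocalMin_line (v := v) (by simp [v])).hasDerivAt_eq_zero
      (hasDerivAt_powerLoss_line hw.1 v)
    simpa [v, mul_sub, sum_sub_distrib, Pi.single_apply, sub_eq_zero, eq_comm] using h
  rcases isEmpty_or_nonempty ι with hι | ⟨⟨j⟩⟩
  · exact ⟨0, isEmptyElim⟩
  · exact ⟨marginalCost β γ w j, fun i => hpair i j⟩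

theorem IsOptimalAllocation.lt_of_lt {β γ x y : ι → ℝ} {A B : ℝ} (hβ : ∀ i, 0 < β i)
    (hγ : ∀ i, 0 < γ i) (hx : IsOptimalAllocation β γ A x) (hy : IsOptimalAllocation β γ B y)
    (hAB : A < B) (i : ι) : x i < y i := by
  obtain ⟨cx, hcx⟩ := hx.exists_marginalCost_eq
  obtain ⟨cy, hcy⟩ := hy.exists_marginalCost_eq
  obtain ⟨j, -, hj⟩ := exists_lt_of_sum_lt (s := univ) (hx.2.1.trans_lt (hAB.trans_eq hy.2.1.symm))
  rw [← marginalCost_lt_marginalCost_iff (hβ j) (hγ j) (hx.1 j) (hy.1 j), hcx, hcy] at hj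
  rwa [← marginalCost_lt_marginalCost_iff (hβ i) (hγ i) (hx.1 i) (hy.1 i), hcx, hcy]

theorem IsOptimalAllocation.geometric {β γ x y : ι → ℝ} {A B C k : ℝ} (hβ : ∀ i, 0 ≤ β i)
    (hγ : ∀ i, 0 ≤ γ i) (hx : IsOptimalAllocation β γ A x) (hy : IsOptimalAllocation β γ B y)
    (hC : ∑ i, y i * (y i / x i) ^ k = C) :
    IsOptimalAllocation β γ C (fun i => y i * (y i / x i) ^ k) := by
  obtain ⟨cx, hcx⟩ := hx.exists_marginalCost_eq
  obtain ⟨cy, hcy⟩ := hy.exists_marginalCost_eq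
  have hpos (i : ι) : 0 < y i * (y i / x i) ^ k := by
    have := hx.1 i
    have := hy.1 i
    positivity
  refine ⟨hpos, hC, fun z hz hzC => powerLoss_le_of_marginalCost_eq hβ hγ hpos hz
    (hzC.trans hC.symm) (c := cy * (cy / cx) ^ k) fun i => ?_⟩
  rw [marginalCost_geometric hx.1 hy.1, hcx, hcy]

lemma continuous_sum_mul_rpow {c r : ι → ℝ} (hr : ∀ i, 0 < r i) :
    Continuous fun k : ℝ => ∑ i, c i * r i ^ k :=
  continuous_finsetSum _ fun i _ => continuous_const.mul (continuous_const_rpow (hr i).ne')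

lemma strictMono_sum_mul_rpow [Nonempty ι] {c r : ι → ℝ} (hc : ∀ i, 0 < c i)
    (hr : ∀ i, 1 < r i) : StrictMono fun k : ℝ => ∑ i, c i * r i ^ k := fun _ _ hab =>
  sum_lt_sum_of_nonempty univ_nonempty fun i _ =>
    mul_lt_mul_of_pos_left (rpow_lt_rpow_of_exponent_lt (hr i) hab) (hc i)

lemma tendsto_sum_mul_rpow_atTop [Nonempty ι] {c r : ι → ℝ} (hc : ∀ i, 0 < c i)
    (hr : ∀ i, 1 < r i) : Tendsto (fun k : ℝ => ∑ i, c i * r i ^ k) atTop atTop := by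
  obtain ⟨j⟩ := ‹Nonempty ι›
  refine tendsto_atTop_mono (fun k => single_le_sum (f := fun i => c i * r i ^ k)
    (fun i _ => (mul_pos (hc i) (rpow_pos_of_pos (one_pos.trans (hr i)) k)).le) (mem_univ j)) ?_
  exact (tendsto_rpow_atTop_of_base_gt_one _ (hr j)).const_mul_atTop (hc j)

theorem autoscale_line_search_general (m : ℕ)
    (β γ : Fin m → ℝ) (hβ : ∀ i, 0 < β i) (hγ : ∀ i, 0 < γ i)
    (N₁ N₂ : ℝ) (hlt : N₁ < N₂)
    (x : Fin m → ℝ) (hx_pos : ∀ i, 0 < x i) (hx_sum : ∑ i, x i = N₁)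
    (hx_min : ∀ z : Fin m → ℝ, (∀ i, 0 < z i) → ∑ i, z i = N₁ →
      ∑ i, β i * x i ^ (-γ i) ≤ ∑ i, β i * z i ^ (-γ i))
    (y : Fin m → ℝ) (hy_pos : ∀ i, 0 < y i) (hy_sum : ∑ i, y i = N₂)
    (hy_min : ∀ z : Fin m → ℝ, (∀ i, 0 < z i) → ∑ i, z i = N₂ →
      ∑ i, β i * y i ^ (-γ i) ≤ ∑ i, β i * z i ^ (-γ i))
    (φ : ℝ → ℝ) (hφ : ∀ k, φ k = ∑ i, y i * (y i / x i) ^ k) :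
    ContinuousOn φ (Set.Ici 0) ∧ StrictMonoOn φ (Set.Ici 0) ∧
      φ 0 = N₂ ∧ Tendsto φ atTop atTop ∧
      ∀ Nt : ℝ, N₂ ≤ Nt →
        (∃! k : ℝ, 0 ≤ k ∧ φ k = Nt) ∧
        ∀ k : ℝ, 0 ≤ k → φ k = Nt →
          ∀ z : Fin m → ℝ, (∀ i, 0 < z i) → ∑ i, z i = Nt →
            ∑ i, β i * (y i * (y i / x i) ^ k) ^ (-γ i) ≤
              ∑ i, β i * z i ^ (-γ i) := by
  have hx : IsOptimalAllocation β γ N₁ x := ⟨hx_pos, hx_sum, hx_min⟩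
  have hy : IsOptimalAllocation β γ N₂ y := ⟨hy_pos, hy_sum, hy_min⟩
  have hr (i : Fin m) : 1 < y i / x i := (one_lt_div (hx_pos i)).2 (hx.lt_of_lt hβ hγ hy hlt i)
  obtain ⟨i₀, -⟩ := exists_lt_of_sum_lt (s := univ) (hx_sum.trans_lt (hlt.trans_eq hy_sum.symm))
  have : Nonempty (Fin m) := ⟨i₀⟩
  obtain rfl : φ = fun k => ∑ i, y i * (y i / x i) ^ k := funext hφ
  have hcont := continuous_sum_mul_rpow (c := y) fun i => one_pos.trans (hr i)
  have hmono := strictMono_sum_mul_rpow hy_pos hr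
  have htop := tendsto_sum_mul_rpow_atTop hy_pos hr
  have hφ0 : ∑ i, y i * (y i / x i) ^ (0 : ℝ) = N₂ := by simpa using hy_sum
  refine ⟨hcont.continuousOn, hmono.strictMonoOn _, hφ0, htop, fun Nt hNt => ⟨?_,
    fun k _ hk => (hx.geometric (fun i => (hβ i).le) (fun i => (hγ i).le) hy hk).2.2⟩⟩
  obtain ⟨k, hk0, hk⟩ := intermediate_value_Ici hcont.continuousOn htop (hφ0.trans_le hNt)
  exact ⟨k, ⟨hk0, hk⟩, fun k' hk' => hmono.injective (hk'.2.trans hk.symm)⟩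

/-- Correctness of the AutoScale line search: with optimal allocations at two
budgets `N₁ < N₂`, the map `φ(k) = ∑ i, N_i*(N₂) (N_i*(N₂)/N_i*(N₁))^k` is
continuous and strictly increasing on `[0, ∞)`, `φ(0) = N₂`, `φ(k) → ∞`;
hence every target budget `N_t ≥ N₂` is reached at a unique `k ≥ 0`, and the
corresponding allocation is optimal at budget `N_t`. -/
theorem autoscale_line_search (m : ℕ) (hm : 1 ≤ m)
    (β γ : Fin m → ℝ) (hβ : ∀ i, 0 < β i) (hγ : ∀ i, 0 < γ i)
    (N₁ N₂ : ℝ) (hN₁ : 0 < N₁) (hlt : N₁ < N₂)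
    (x : Fin m → ℝ) (hx_pos : ∀ i, 0 < x i) (hx_sum : ∑ i, x i = N₁)
    (hx_min : ∀ z : Fin m → ℝ, (∀ i, 0 < z i) → ∑ i, z i = N₁ →
      ∑ i, β i * x i ^ (-γ i) ≤ ∑ i, β i * z i ^ (-γ i))
    (y : Fin m → ℝ) (hy_pos : ∀ i, 0 < y i) (hy_sum : ∑ i, y i = N₂)
    (hy_min : ∀ z : Fin m → ℝ, (∀ i, 0 < z i) → ∑ i, z i = N₂ →
      ∑ i, β i * y i ^ (-γ i) ≤ ∑ i, β i * z i ^ (-γ i))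
    (φ : ℝ → ℝ) (hφ : ∀ k, φ k = ∑ i, y i * (y i / x i) ^ k) :
    ContinuousOn φ (Set.Ici 0) ∧ StrictMonoOn φ (Set.Ici 0) ∧
      φ 0 = N₂ ∧ Tendsto φ atTop atTop ∧
      ∀ Nt : ℝ, N₂ ≤ Nt →
        (∃! k : ℝ, 0 ≤ k ∧ φ k = Nt) ∧
        ∀ k : ℝ, 0 ≤ k → φ k = Nt →
          ∀ z : Fin m → ℝ, (∀ i, 0 < z i) → ∑ i, z i = Nt →
            ∑ i, β i * (y i * (y i / x i) ^ k) ^ (-γ i) ≤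
              ∑ i, β i * z i ^ (-γ i) :=
  autoscale_line_search_general m β γ hβ hγ N₁ N₂ hlt x hx_pos hx_sum hx_min y hy_pos hy_sum hy_min
    φ hφ
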